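/- arXiv:1806.04047 — 6 statements merged into one kernel-verified Lean document; each statement's English description precedes it below -/
import Mathlib

section
/- Let G ≥ 1, n_1,...,n_G positive reals with n = Σ n_i, and cones C_0,...,C_G ⊆ ℝ^p. Suppose there exists a set I ⊆ {1,...,G} and scalars 0 ≤ ρ̄ ≤ 1, λ_min > 0 with λ_min ≤ 1, such that Σ_{i∈I} n_i ≥ ρ̄ n and for all i ∈ I, δ_i ∈ C_i, δ_0 ∈ C_0: ‖δ_i + δ_0‖₂ ≥ λ_min(‖δ_0‖₂ + ‖δ_i‖₂). Then for all δ_0 ∈ C_0 and δ_i ∈ C_i (i = 1,...,G): Σ_{i=1}^G n_i ‖δ_0 + δ_i‖₂ ≥ (ρ̄ λ_min / 3)(n ‖δ_0‖₂ + Σ_{i=1}^G n_i ‖δ_i‖₂). -/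
/-- DEIC implies the weighted incoherence lower bound (Lemma `incolem main`). -/
theorem stmt_0 {p G : ℕ} (hG : 1 ≤ G)
    (n : Fin G → ℝ) (hn : ∀ i, 0 < n i) (ntot : ℝ) (hntot : ntot = ∑ i, n i)
    (C0 : Set (EuclideanSpace ℝ (Fin p))) (C : Fin G → Set (EuclideanSpace ℝ (Fin p)))
    (I : Finset (Fin G)) (ρ lammin : ℝ)
    (hρ0 : 0 ≤ ρ) (hρ1 : ρ ≤ 1) (hlam0 : 0 < lammin) (hlam1 : lammin ≤ 1)
    (hI : ρ * ntot ≤ ∑ i ∈ I, n i)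
    (hinc : ∀ i ∈ I, ∀ δi ∈ C i, ∀ δ0 ∈ C0,
      lammin * (‖δ0‖ + ‖δi‖) ≤ ‖δi + δ0‖) :
    ∀ δ0 ∈ C0, ∀ δ : Fin G → EuclideanSpace ℝ (Fin p), (∀ i, δ i ∈ C i) →
      (ρ * lammin / 3) * (ntot * ‖δ0‖ + ∑ i, n i * ‖δ i‖) ≤
        ∑ i, n i * ‖δ0 + δ i‖ := by
  intro δ0 hδ0 δ hδ
  classical
  set P : Fin G → Prop := fun i => 2 * ‖δ0‖ ≤ ‖δ i‖ with hP
  set S2 : Finset (Fin G) := Iᶜ.filter P with hS2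
  set S3 : Finset (Fin G) := Iᶜ.filter (fun i => ¬ P i) with hS3
  -- split sums
  have hsplit : ∀ f : Fin G → ℝ,
      ∑ i, f i = ∑ i ∈ I, f i + (∑ i ∈ S2, f i + ∑ i ∈ S3, f i) := by
    intro f
    rw [hS2, hS3, Finset.sum_filter_add_sum_filter_not,
      Finset.sum_add_sum_compl]
  -- nonnegativity facts
  have hnn : ∀ i, (0:ℝ) ≤ n i * ‖δ0 + δ i‖ := fun i =>
    mul_nonneg (hn i).le (norm_nonneg _)
  have hnn' : ∀ i, (0:ℝ) ≤ n i * ‖δ i‖ := fun i =>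
    mul_nonneg (hn i).le (norm_nonneg _)
  have hA1 : (0:ℝ) ≤ ∑ i ∈ I, n i * ‖δ i‖ := Finset.sum_nonneg fun i _ => hnn' i
  have hB1 : (0:ℝ) ≤ ∑ i ∈ S2, n i * ‖δ i‖ := Finset.sum_nonneg fun i _ => hnn' i
  have hC1 : (0:ℝ) ≤ ∑ i ∈ S3, n i * ‖δ i‖ := Finset.sum_nonneg fun i _ => hnn' i
  have hC : (0:ℝ) ≤ ∑ i ∈ S3, n i * ‖δ0 + δ i‖ := Finset.sum_nonneg fun i _ => hnn i
  have hd0 : (0:ℝ) ≤ ‖δ0‖ := norm_nonneg _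
  have hntot0 : 0 < ntot := by
    rw [hntot]
    apply Finset.sum_pos (fun i _ => hn i)
    have : Nonempty (Fin G) := ⟨⟨0, hG⟩⟩
    exact Finset.univ_nonempty
  -- F1 : incoherence on I
  have hF1 : lammin * ((∑ i ∈ I, n i) * ‖δ0‖ + ∑ i ∈ I, n i * ‖δ i‖)
      ≤ ∑ i ∈ I, n i * ‖δ0 + δ i‖ := by
    have : ∀ i ∈ I, lammin * (n i * ‖δ0‖ + n i * ‖δ i‖) ≤ n i * ‖δ0 + δ i‖ := by
      intro i hi
      have h := hinc i hi (δ i) (hδ i) δ0 hδ0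
      rw [add_comm (δ i) δ0] at h
      have := mul_le_mul_of_nonneg_left h (hn i).le
      nlinarith [hn i]
    calc lammin * ((∑ i ∈ I, n i) * ‖δ0‖ + ∑ i ∈ I, n i * ‖δ i‖)
        = ∑ i ∈ I, lammin * (n i * ‖δ0‖ + n i * ‖δ i‖) := by
          rw [Finset.sum_mul, ← Finset.sum_add_distrib, Finset.mul_sum]
      _ ≤ ∑ i ∈ I, n i * ‖δ0 + δ i‖ := Finset.sum_le_sum this
  -- F2 : on S2, n i ‖δ i‖ ≤ 2 * n i ‖δ0 + δ i‖
  have hF2 : ∑ i ∈ S2, n i * ‖δ i‖ ≤ 2 * ∑ i ∈ S2, n i * ‖δ0 + δ i‖ := by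
    rw [Finset.mul_sum]
    apply Finset.sum_le_sum
    intro i hi
    have hPi : 2 * ‖δ0‖ ≤ ‖δ i‖ := (Finset.mem_filter.mp hi).2
    have htri : ‖δ i‖ ≤ ‖δ0 + δ i‖ + ‖δ0‖ := by
      calc ‖δ i‖ = ‖(δ0 + δ i) - δ0‖ := by congr 1; abel
        _ ≤ ‖δ0 + δ i‖ + ‖δ0‖ := norm_sub_le _ _
    nlinarith [hn i]
  -- F3 : on S3, n i ‖δ i‖ ≤ 2 ‖δ0‖ n i, and sum of n over S3 ≤ ntot
  have hF3 : ∑ i ∈ S3, n i * ‖δ i‖ ≤ 2 * ‖δ0‖ * ntot := by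
    have h1 : ∑ i ∈ S3, n i * ‖δ i‖ ≤ ∑ i ∈ S3, 2 * ‖δ0‖ * n i := by
      apply Finset.sum_le_sum
      intro i hi
      have hPi : ¬ (2 * ‖δ0‖ ≤ ‖δ i‖) := (Finset.mem_filter.mp hi).2
      nlinarith [hn i, norm_nonneg (δ i)]
    have h2 : ∑ i ∈ S3, n i ≤ ntot := by
      rw [hntot]
      exact Finset.sum_le_sum_of_subset_of_nonneg (Finset.subset_univ _)
        (fun i _ _ => (hn i).le)
    calc ∑ i ∈ S3, n i * ‖δ i‖ ≤ ∑ i ∈ S3, 2 * ‖δ0‖ * n i := h1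
      _ = 2 * ‖δ0‖ * ∑ i ∈ S3, n i := by rw [Finset.mul_sum]
      _ ≤ 2 * ‖δ0‖ * ntot := by nlinarith
  -- combine
  rw [hsplit (fun i => n i * ‖δ i‖), hsplit (fun i => n i * ‖δ0 + δ i‖)]
  have hB : (0:ℝ) ≤ ∑ i ∈ S2, n i * ‖δ0 + δ i‖ := Finset.sum_nonneg fun i _ => hnn i
  have hrl : ρ * lammin ≤ 1 := by nlinarith
  nlinarith [mul_le_mul_of_nonneg_left hI (mul_nonneg hlam0.le hd0),
    mul_le_mul_of_nonneg_left hA1 (mul_nonneg hρ0 hlam0.le),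
    mul_le_mul_of_nonneg_left hF3 (mul_nonneg hρ0 hlam0.le),
    mul_nonneg (mul_nonneg hρ0 hlam0.le) hB1,
    mul_nonneg hlam0.le (mul_nonneg hd0 hntot0.le),
    mul_le_mul_of_nonneg_right hρ1 (mul_nonneg hlam0.le (mul_nonneg hd0 hntot0.le))]
end

section
/- Let G ≥ 1 and for g = 0,...,G let n_g > 0 with n_0 = n = Σ_{g=1}^G n_g. Let δ_0,...,δ_G ∈ ℝ^p and nonnegative constants ρ_0,...,ρ_G, φ_1,...,φ_G, μ_0 > 0, μ_1,...,μ_G > 0, ξ_0,...,ξ_G ≥ 0, w_0,...,w_G ≥ 0. Suppose for t-indexed sequences: ‖δ_g^{(t+1)}‖₂ ≤ ρ_g‖δ_g^{(t)}‖₂ + ξ_g w_g + φ_g‖δ_0^{(t)}‖₂ for g ≥ 1, and ‖δ_0^{(t+1)}‖₂ ≤ ρ_0‖δ_0^{(t)}‖₂ + ξ_0 w_0 + μ_0 Σ_{g=1}^G (φ_g/μ_g)‖δ_g^{(t)}‖₂. Define ρ = max(ρ_0 + Σ_{g=1}^G √(n_g/n) φ_g, max_{g≥1}[ρ_g + √(n/n_g)(μ_0/μ_g)φ_g]).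 Then Σ_{g=0}^G √(n_g/n)‖δ_g^{(t+1)}‖₂ ≤ ρ Σ_{g=0}^G √(n_g/n)‖δ_g^{(t)}‖₂ + Σ_{g=0}^G √(n_g/n) ξ_g w_g. -/
/-!
Weight the recursion of group `g` by `a_g = √(n_g / n)` and add the recursion of `δ_0`. The
coefficient of `‖δ_0‖` becomes `ρ_0 + Σ a_g φ_g` and that of `‖δ_g‖` becomes
`a_g ρ_g + μ_0 φ_g / μ_g = a_g (ρ_g + a_g⁻¹ (μ_0 / μ_g) φ_g)`; since `a_g⁻¹ = √(n / n_g)`, both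
are at most `ρ` times the weight of the corresponding term on the left.
-/

open Finset

theorem weighted_sum_le_of_coupled_recursions {ι : Type*} [Fintype ι]
    (a : ι → ℝ) (ha : ∀ g, 0 ≤ a g) (x₀ x₀' : ℝ) (x x' : ι → ℝ)
    (hx₀ : 0 ≤ x₀) (hx : ∀ g, 0 ≤ x g) (ρ₀ c₀ : ℝ) (ρ c φ β : ι → ℝ)
    (h₀ : x₀' ≤ ρ₀ * x₀ + c₀ + ∑ g, β g * x g)
    (h : ∀ g, x' g ≤ ρ g * x g + c g + φ g * x₀) (R : ℝ)
    (hR₀ : ρ₀ + ∑ g, a g * φ g ≤ R) (hR : ∀ g, β g + a g * ρ g ≤ R * a g) :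
    x₀' + ∑ g, a g * x' g ≤ R * (x₀ + ∑ g, a g * x g) + (c₀ + ∑ g, a g * c g) :=
  calc x₀' + ∑ g, a g * x' g
      ≤ (ρ₀ * x₀ + c₀ + ∑ g, β g * x g) + ∑ g, a g * (ρ g * x g + c g + φ g * x₀) :=
        add_le_add h₀ (sum_le_sum fun g _ => mul_le_mul_of_nonneg_left (h g) (ha g))
    _ = (ρ₀ + ∑ g, a g * φ g) * x₀ + ∑ g, (β g + a g * ρ g) * x g
          + (c₀ + ∑ g, a g * c g) := by
        simp only [mul_add, add_mul, sum_add_distrib, sum_mul]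
        ring_nf
    _ ≤ R * x₀ + ∑ g, (R * a g) * x g + (c₀ + ∑ g, a g * c g) := by
        gcongr with g _
        · exact hx g
        · exact hR g
    _ = R * (x₀ + ∑ g, a g * x g) + (c₀ + ∑ g, a g * c g) := by
        simp only [mul_add, mul_sum, mul_assoc]

theorem stmt_6_general {p G : ℕ} (hG : 1 ≤ G)
    (n : Fin G → ℝ) (hn : ∀ g, 0 < n g) (ntot : ℝ) (hntot : ntot = ∑ g, n g)
    (d0 d0' : EuclideanSpace ℝ (Fin p)) (d d' : Fin G → EuclideanSpace ℝ (Fin p))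
    (ρ0 : ℝ) (ρ φ : Fin G → ℝ) (μ0 : ℝ) (μ : Fin G → ℝ)
    (ξ0 w0 : ℝ) (ξ w : Fin G → ℝ)
    (hrecg : ∀ g, ‖d' g‖ ≤ ρ g * ‖d g‖ + ξ g * w g + φ g * ‖d0‖)
    (hrec0 : ‖d0'‖ ≤ ρ0 * ‖d0‖ + ξ0 * w0 + μ0 * ∑ g, (φ g / μ g) * ‖d g‖)
    (ρbar : ℝ)
    (hρbar : ρbar = max (ρ0 + ∑ g, Real.sqrt (n g / ntot) * φ g)
      (Finset.univ.sup' ⟨⟨0, hG⟩, Finset.mem_univ _⟩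
        (fun g => ρ g + Real.sqrt (ntot / n g) * (μ0 / μ g) * φ g))) :
    ‖d0'‖ + ∑ g, Real.sqrt (n g / ntot) * ‖d' g‖ ≤
      ρbar * (‖d0‖ + ∑ g, Real.sqrt (n g / ntot) * ‖d g‖) +
        (ξ0 * w0 + ∑ g, Real.sqrt (n g / ntot) * (ξ g * w g)) := by
  have hntot_pos : 0 < ntot :=
    hntot ▸ sum_pos (fun g _ => hn g) ⟨⟨0, hG⟩, mem_univ _⟩
  have hweight_pos g : 0 < Real.sqrt (n g / ntot) := by
    have := hn g
    positivity
  refine weighted_sum_le_of_coupled_recursions _ (fun g => (hweight_pos g).le) _ _ _ _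
    (norm_nonneg _) (fun g => norm_nonneg _) ρ0 _ ρ _ φ (fun g => μ0 * (φ g / μ g))
    (by simpa only [mul_sum, mul_assoc] using hrec0) hrecg ρbar
    (hρbar ▸ le_max_left _ _) fun g => ?_
  have hρbar_ge : ρ g + Real.sqrt (ntot / n g) * (μ0 / μ g) * φ g ≤ ρbar :=
    hρbar ▸ le_max_of_le_right
      (le_sup' (fun g => ρ g + Real.sqrt (ntot / n g) * (μ0 / μ g) * φ g) (mem_univ g))
  rw [← inv_div, Real.sqrt_inv] at hρbar_ge
  calc μ0 * (φ g / μ g) + Real.sqrt (n g / ntot) * ρ g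
      = (ρ g + (Real.sqrt (n g / ntot))⁻¹ * (μ0 / μ g) * φ g) * Real.sqrt (n g / ntot) := by
        linear_combination (-(μ0 * (φ g / μ g))) * inv_mul_cancel₀ (hweight_pos g).ne'
    _ ≤ ρbar * Real.sqrt (n g / ntot) := by gcongr

/-- Combining the per-group recursions into a single recursion on the weighted
error sum, with contraction factor `ρ`. -/
theorem stmt_6 {p G : ℕ} (hG : 1 ≤ G)
    (n : Fin G → ℝ) (hn : ∀ g, 0 < n g) (ntot : ℝ) (hntot : ntot = ∑ g, n g)
    (d0 d0' : EuclideanSpace ℝ (Fin p)) (d d' : Fin G → EuclideanSpace ℝ (Fin p))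
    (ρ0 : ℝ) (ρ φ : Fin G → ℝ) (μ0 : ℝ) (μ : Fin G → ℝ)
    (ξ0 w0 : ℝ) (ξ w : Fin G → ℝ)
    (hρ0 : 0 ≤ ρ0) (hρ : ∀ g, 0 ≤ ρ g) (hφ : ∀ g, 0 ≤ φ g)
    (hμ0 : 0 < μ0) (hμ : ∀ g, 0 < μ g)
    (hξ0 : 0 ≤ ξ0) (hξ : ∀ g, 0 ≤ ξ g) (hw0 : 0 ≤ w0) (hw : ∀ g, 0 ≤ w g)
    (hrecg : ∀ g, ‖d' g‖ ≤ ρ g * ‖d g‖ + ξ g * w g + φ g * ‖d0‖)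
    (hrec0 : ‖d0'‖ ≤ ρ0 * ‖d0‖ + ξ0 * w0 + μ0 * ∑ g, (φ g / μ g) * ‖d g‖)
    (ρbar : ℝ)
    (hρbar : ρbar = max (ρ0 + ∑ g, Real.sqrt (n g / ntot) * φ g)
      (Finset.univ.sup' ⟨⟨0, hG⟩, Finset.mem_univ _⟩
        (fun g => ρ g + Real.sqrt (ntot / n g) * (μ0 / μ g) * φ g))) :
    ‖d0'‖ + ∑ g, Real.sqrt (n g / ntot) * ‖d' g‖ ≤
      ρbar * (‖d0‖ + ∑ g, Real.sqrt (n g / ntot) * ‖d g‖) +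
        (ξ0 * w0 + ∑ g, Real.sqrt (n g / ntot) * (ξ g * w g)) :=
  stmt_6_general hG n hn ntot hntot d0 d0' d d' ρ0 ρ φ μ0 μ ξ0 w0 ξ w hrecg hrec0 ρbar hρbar
end

section
/- Let H ⊆ ℝ^q be a set, κ > 0 with κ ≤ inf_{u ∈ H} (1/n)‖Xu‖₂², and suppose δ ∈ ℝ^q satisfies (1/n)‖Xδ‖₂² ≤ (2/n) ωᵀ X δ, where δ/s ∈ H for s = Σ_{g=0}^G (n_g/n)‖δ_g‖₂ > 0 (writing δ = (δ_0,...,δ_G) in blocks). Let H̄ = {u : u = δ'/s' with δ' in the error cone and Σ_g √(n_g/n)‖δ'_g‖₂ = 1}, and suppose (2/n) ωᵀXδ ≤ (2/n) sup_{u∈H̄} ωᵀXu · Σ_g √(n_g/n)‖δ_g‖₂. Then with γ = max_{g} n/n_g: Σ_{g=0}^G √(n_g/n)‖δ_g‖₂ ≤ 2γ sup_{u∈H̄} ωᵀXu / (nκ). -/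
open scoped Matrix

/-- Deterministic error bound (Theorem 1): under the RE condition on `H` and the
given bound on the noise interaction, the √-weighted error sum is controlled. -/
theorem stmt_8 {p G m : ℕ}
    (X : Matrix (Fin m) (Fin (G + 1) × Fin p) ℝ) (ω : Fin m → ℝ)
    (n : ℝ) (hn : 0 < n) (ng : Fin (G + 1) → ℝ) (hng : ∀ g, 0 < ng g)
    (κ : ℝ) (hκ : 0 < κ)
    (δ : Fin (G + 1) → EuclideanSpace ℝ (Fin p))
    (δflat : Fin (G + 1) × Fin p → ℝ) (hδflat : δflat = fun gi => δ gi.1 gi.2)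
    (H : Set (Fin (G + 1) × Fin p → ℝ))
    (hRE : ∀ u ∈ H, κ ≤ (1 / n) * ((X.mulVec u) ⬝ᵥ (X.mulVec u)))
    (s : ℝ) (hs : s = ∑ g, (ng g / n) * ‖δ g‖) (hspos : 0 < s)
    (hmem : s⁻¹ • δflat ∈ H)
    (hbasic : (1 / n) * ((X.mulVec δflat) ⬝ᵥ (X.mulVec δflat)) ≤
      (2 / n) * (ω ⬝ᵥ X.mulVec δflat))
    (S : ℝ)
    (hub : (2 / n) * (ω ⬝ᵥ X.mulVec δflat) ≤
      (2 / n) * S * ∑ g, Real.sqrt (ng g / n) * ‖δ g‖)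
    (γ : ℝ) (hγ : γ = Finset.univ.sup' ⟨0, Finset.mem_univ 0⟩ (fun g => n / ng g)) :
    ∑ g, Real.sqrt (ng g / n) * ‖δ g‖ ≤ 2 * γ * S / (n * κ) := by
  set A : ℝ := ∑ g, Real.sqrt (ng g / n) * ‖δ g‖ with hA
  -- γ bounds
  have hge : ∀ g : Fin (G + 1), n / ng g ≤ γ := by
    intro g
    rw [hγ]
    exact Finset.le_sup' (fun g => n / ng g) (Finset.mem_univ g)
  have hγpos : 0 < γ :=
    lt_of_lt_of_le (div_pos hn (hng 0)) (hge 0)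
  -- A > 0
  have hterm : ∀ g : Fin (G+1), (0:ℝ) ≤ Real.sqrt (ng g / n) * ‖δ g‖ := fun g =>
    mul_nonneg (Real.sqrt_nonneg _) (norm_nonneg _)
  have hApos : 0 < A := by
    rcases (Finset.sum_nonneg (fun g _ => hterm g)).lt_or_eq with h | h
    · exact h
    · exfalso
      have hz := (Finset.sum_eq_zero_iff_of_nonneg (fun g _ => hterm g)).mp h.symm
      have hnorm : ∀ g : Fin (G+1), ‖δ g‖ = 0 := by
        intro g
        have hzg := hz g (Finset.mem_univ g)
        have hsq : 0 < Real.sqrt (ng g / n) :=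
          Real.sqrt_pos.mpr (div_pos (hng g) hn)
        rcases mul_eq_zero.mp hzg with h' | h'
        · exact absurd h' (ne_of_gt hsq)
        · exact h'
      have : s = 0 := by
        rw [hs]
        exact Finset.sum_eq_zero fun g _ => by rw [hnorm g, mul_zero]
      linarith
  -- s ≥ A / √γ, i.e. √γ * s ≥ A
  have hsA : A ≤ Real.sqrt γ * s := by
    rw [hs, Finset.mul_sum, hA]
    apply Finset.sum_le_sum
    intro g _
    rw [← mul_assoc]
    apply mul_le_mul_of_nonneg_right _ (norm_nonneg _)
    have hw : 0 < ng g / n := div_pos (hng g) hn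
    have h1 : (1:ℝ) ≤ γ * (ng g / n) := by
      have := hge g
      rw [div_le_iff₀ (hng g)] at this
      rw [← mul_div_assoc, le_div_iff₀ hn, one_mul]
      linarith
    calc Real.sqrt (ng g / n) = Real.sqrt (ng g / n) * 1 := by ring
      _ ≤ Real.sqrt (ng g / n) * (Real.sqrt γ * Real.sqrt (ng g / n)) := by
          apply mul_le_mul_of_nonneg_left _ (Real.sqrt_nonneg _)
          rw [← Real.sqrt_mul (le_of_lt hγpos)]
          have : (1:ℝ) = Real.sqrt 1 := Real.sqrt_one.symm
          rw [this]
          exact Real.sqrt_le_sqrt h1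
      _ = Real.sqrt γ * (Real.sqrt (ng g / n) * Real.sqrt (ng g / n)) := by ring
      _ = Real.sqrt γ * (ng g / n) := by rw [Real.mul_self_sqrt (le_of_lt hw)]
  -- RE condition gives κ s² ≤ (1/n) ‖Xδ‖²
  have hre := hRE _ hmem
  have hml : X.mulVec (s⁻¹ • δflat) = s⁻¹ • X.mulVec δflat := by
    rw [Matrix.mulVec_smul]
  rw [hml, smul_dotProduct, dotProduct_smul, smul_eq_mul, smul_eq_mul] at hre
  have hQ : κ * s ^ 2 ≤ (1 / n) * ((X.mulVec δflat) ⬝ᵥ (X.mulVec δflat)) := by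
    have hs2 : (0:ℝ) < s ^ 2 := by positivity
    have := mul_le_mul_of_nonneg_left hre (le_of_lt hs2)
    calc κ * s ^ 2 = s ^ 2 * κ := by ring
      _ ≤ s ^ 2 * (1 / n * (s⁻¹ * (s⁻¹ * (X.mulVec δflat ⬝ᵥ X.mulVec δflat)))) := this
      _ = (s * s⁻¹) * (s * s⁻¹) * (1 / n * (X.mulVec δflat ⬝ᵥ X.mulVec δflat)) := by ring
      _ = (1 / n) * ((X.mulVec δflat) ⬝ᵥ (X.mulVec δflat)) := by
          rw [mul_inv_cancel₀ (ne_of_gt hspos)]; ring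
  have hchain : κ * s ^ 2 ≤ (2 / n) * S * A :=
    le_trans hQ (le_trans hbasic hub)
  -- A² ≤ γ s²
  have hAs : A ^ 2 ≤ γ * s ^ 2 := by
    have h2 := mul_self_le_mul_self (le_of_lt hApos) hsA
    calc A ^ 2 = A * A := sq A
      _ ≤ (Real.sqrt γ * s) * (Real.sqrt γ * s) := h2
      _ = (Real.sqrt γ * Real.sqrt γ) * s ^ 2 := by ring
      _ = γ * s ^ 2 := by rw [Real.mul_self_sqrt (le_of_lt hγpos)]
  -- combine: κ A² ≤ γ κ s² ≤ γ (2/n) S A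
  have hfin : κ * A ^ 2 ≤ γ * ((2 / n) * S * A) := by
    calc κ * A ^ 2 ≤ κ * (γ * s ^ 2) := by
          apply mul_le_mul_of_nonneg_left hAs (le_of_lt hκ)
      _ = γ * (κ * s ^ 2) := by ring
      _ ≤ γ * ((2 / n) * S * A) := mul_le_mul_of_nonneg_left hchain (le_of_lt hγpos)
  have hdiv : κ * A ≤ γ * (2 / n) * S := by
    have : (κ * A) * A ≤ (γ * (2 / n) * S) * A := by nlinarith [hfin]
    exact le_of_mul_le_mul_right this hApos
  rw [le_div_iff₀ (mul_pos hn hκ)]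
  have hdiv' : n * (κ * A) ≤ n * (γ * (2 / n) * S) :=
    mul_le_mul_of_nonneg_left hdiv hn.le
  have heq : n * (γ * (2 / n) * S) = 2 * γ * S := by
    field_simp
  nlinarith [hdiv', heq]
end

section
/- Let X_g ∈ ℝ^{n_g×p}, μ_g > 0, and define on B_g = C_g ∩ B^p (C_g a cone, B^p the unit ball) the constants ρ_g = sup_{u,v∈B_g} vᵀ(I − μ_g X_gᵀX_g)u, η_g = μ_g sup_{v∈B_g} vᵀX_gᵀ(ω_g/‖ω_g‖₂), φ_g = μ_g sup_{v∈B_g,u∈B_0} −vᵀX_gᵀX_g u. Suppose δ_g^{(t)} ∈ C_g, δ_0^{(t)} ∈ C_0, ω_g ∈ ℝ^{n_g}, and β_g^{(t+1)} is obtained by projecting β_g^{(t)} + μ_g X_gᵀ(y_g − X_g(β_0^{(t)}+β_g^{(t)})) onto a convex set Ω containing β_g* with y_g = X_g(β_0*+β_g*) + ω_g. Given the projection facts ‖Π_{Ω−{β*}}(z)‖₂ ≤ ‖Π_{C}(z)‖₂ ≤ sup_{v∈C∩B^p}⟨v,z⟩, then ‖δ_g^{(t+1)}‖₂ ≤ ρ_g‖δ_g^{(t)}‖₂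 + η_g‖ω_g‖₂ + φ_g‖δ_0^{(t)}‖₂. -/
open scoped Matrix

/-- Per-iteration error bound of PBGD: given the projection facts, the next
individual error is bounded by `ρ_g‖δ_g‖ + η_g‖ω_g‖ + φ_g‖δ_0‖`. -/
theorem stmt_14 {p m : ℕ}
    (Xg : Matrix (Fin m) (Fin p) ℝ) (μg : ℝ) (hμ : 0 < μg)
    (C0 Cg : Set (Fin p → ℝ))
    (hC0cone : ∀ c : ℝ, 0 ≤ c → ∀ x ∈ C0, c • x ∈ C0)
    (hCgcone : ∀ c : ℝ, 0 ≤ c → ∀ x ∈ Cg, c • x ∈ Cg)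
    (h00 : (0 : Fin p → ℝ) ∈ C0) (h0g : (0 : Fin p → ℝ) ∈ Cg)
    (B0 Bg : Set (Fin p → ℝ))
    (hB0 : B0 = {v | v ∈ C0 ∧ Real.sqrt (v ⬝ᵥ v) ≤ 1})
    (hBg : Bg = {v | v ∈ Cg ∧ Real.sqrt (v ⬝ᵥ v) ≤ 1})
    (ω : Fin m → ℝ) (hω : ω ≠ 0)
    (ρg ηg φg : ℝ)
    (hρbdd : BddAbove {r | ∃ u ∈ Bg, ∃ v ∈ Bg,
      r = v ⬝ᵥ u - μg * ((Xg.mulVec v) ⬝ᵥ (Xg.mulVec u))})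
    (hηbdd : BddAbove {r | ∃ v ∈ Bg,
      r = (Xg.mulVec v) ⬝ᵥ ((Real.sqrt (ω ⬝ᵥ ω))⁻¹ • ω)})
    (hφbdd : BddAbove {r | ∃ v ∈ Bg, ∃ u ∈ B0,
      r = -((Xg.mulVec v) ⬝ᵥ (Xg.mulVec u))})
    (hρg : ρg = sSup {r | ∃ u ∈ Bg, ∃ v ∈ Bg,
      r = v ⬝ᵥ u - μg * ((Xg.mulVec v) ⬝ᵥ (Xg.mulVec u))})
    (hηg : ηg = μg * sSup {r | ∃ v ∈ Bg,
      r = (Xg.mulVec v) ⬝ᵥ ((Real.sqrt (ω ⬝ᵥ ω))⁻¹ • ω)})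
    (hφg : φg = μg * sSup {r | ∃ v ∈ Bg, ∃ u ∈ B0,
      r = -((Xg.mulVec v) ⬝ᵥ (Xg.mulVec u))})
    (δ0 δg δnext : Fin p → ℝ) (hδ0 : δ0 ∈ C0) (hδg : δg ∈ Cg)
    (z : Fin p → ℝ)
    (hz : z = δg + μg • (Xgᵀ.mulVec (ω - Xg.mulVec (δ0 + δg))))
    (hzbdd : BddAbove {r | ∃ v ∈ Bg, r = v ⬝ᵥ z})
    (hproj : Real.sqrt (δnext ⬝ᵥ δnext) ≤ sSup {r | ∃ v ∈ Bg, r = v ⬝ᵥ z}) :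
    Real.sqrt (δnext ⬝ᵥ δnext) ≤
      ρg * Real.sqrt (δg ⬝ᵥ δg) + ηg * Real.sqrt (ω ⬝ᵥ ω) +
        φg * Real.sqrt (δ0 ⬝ᵥ δ0) := by

  classical
  have dotnn : ∀ {k : ℕ} (x : Fin k → ℝ), 0 ≤ x ⬝ᵥ x := by
    intro k x
    exact Finset.sum_nonneg fun i _ => mul_self_nonneg _
  -- 0 is in B0 and Bg
  have h0B0 : (0 : Fin p → ℝ) ∈ B0 := by
    rw [hB0]; refine ⟨h00, ?_⟩
    simp [zero_dotProduct]
  have h0Bg : (0 : Fin p → ℝ) ∈ Bg := by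
    rw [hBg]; refine ⟨h0g, ?_⟩
    simp [zero_dotProduct]
  have hωpos : 0 < Real.sqrt (ω ⬝ᵥ ω) := by
    have : ω ⬝ᵥ ω ≠ 0 := by
      intro h; exact hω ((dotProduct_self_eq_zero).mp h)
    exact Real.sqrt_pos.mpr (lt_of_le_of_ne (dotnn ω) (Ne.symm this))
  -- nonnegativity of the sups used in degenerate cases
  have hρnn : 0 ≤ ρg := by
    rw [hρg]
    have : (0 : ℝ) ∈ {r | ∃ u ∈ Bg, ∃ v ∈ Bg,
        r = v ⬝ᵥ u - μg * ((Xg.mulVec v) ⬝ᵥ (Xg.mulVec u))} := by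
      exact ⟨0, h0Bg, 0, h0Bg, by simp⟩
    exact le_csSup hρbdd this
  have hφsupnn : 0 ≤ sSup {r | ∃ v ∈ Bg, ∃ u ∈ B0,
      r = -((Xg.mulVec v) ⬝ᵥ (Xg.mulVec u))} := by
    have : (0 : ℝ) ∈ {r | ∃ v ∈ Bg, ∃ u ∈ B0,
        r = -((Xg.mulVec v) ⬝ᵥ (Xg.mulVec u))} := ⟨0, h0Bg, 0, h0B0, by simp⟩
    exact le_csSup hφbdd this
  have hφnn : 0 ≤ φg := by
    rw [hφg]; exact mul_nonneg hμ.le hφsupnn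
  -- main: bound the sup
  have key : sSup {r | ∃ v ∈ Bg, r = v ⬝ᵥ z} ≤
      ρg * Real.sqrt (δg ⬝ᵥ δg) + ηg * Real.sqrt (ω ⬝ᵥ ω) +
        φg * Real.sqrt (δ0 ⬝ᵥ δ0) := by
    refine csSup_le ⟨(0 : Fin p → ℝ) ⬝ᵥ z, ⟨0, h0Bg, rfl⟩⟩ ?_
    rintro r ⟨v, hv, rfl⟩
    -- decompose v ⬝ᵥ z
    have hdec : v ⬝ᵥ z =
        (v ⬝ᵥ δg - μg * ((Xg.mulVec v) ⬝ᵥ (Xg.mulVec δg)))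
          + μg * ((Xg.mulVec v) ⬝ᵥ ω)
          + μg * (-((Xg.mulVec v) ⬝ᵥ (Xg.mulVec δ0))) := by
      rw [hz]
      rw [dotProduct_add, dotProduct_smul]
      rw [Matrix.dotProduct_mulVec, Matrix.vecMul_transpose]
      rw [dotProduct_sub, Matrix.mulVec_add, dotProduct_add]
      simp only [smul_eq_mul]
      ring
    rw [hdec]
    have hterm1 : v ⬝ᵥ δg - μg * ((Xg.mulVec v) ⬝ᵥ (Xg.mulVec δg)) ≤
        ρg * Real.sqrt (δg ⬝ᵥ δg) := by
      by_cases h : δg = 0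
      · simp [h, Matrix.mulVec_zero, mul_nonneg hρnn (Real.sqrt_nonneg _)]
      · set a := Real.sqrt (δg ⬝ᵥ δg) with ha
        have hapos : 0 < a := by
          have : δg ⬝ᵥ δg ≠ 0 := fun hh => h ((dotProduct_self_eq_zero).mp hh)
          exact Real.sqrt_pos.mpr (lt_of_le_of_ne (dotnn δg) (Ne.symm this))
        set u : Fin p → ℝ := a⁻¹ • δg with hu
        have huBg : u ∈ Bg := by
          rw [hBg]
          refine ⟨hCgcone _ (inv_nonneg.mpr hapos.le) _ hδg, ?_⟩
          have h1 : u ⬝ᵥ u = a⁻¹ * (a⁻¹ * (δg ⬝ᵥ δg)) := by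
            rw [hu, smul_dotProduct, dotProduct_smul, smul_eq_mul, smul_eq_mul]
          have hsq : δg ⬝ᵥ δg = a * a := by
            rw [ha, Real.mul_self_sqrt (dotnn δg)]
          rw [h1, hsq]
          field_simp
          simp
        have hδeq : δg = a • u := by
          rw [hu, smul_smul, mul_inv_cancel₀ hapos.ne', one_smul]
        have hmem : v ⬝ᵥ u - μg * ((Xg.mulVec v) ⬝ᵥ (Xg.mulVec u)) ≤ ρg := by
          rw [hρg]
          exact le_csSup hρbdd ⟨u, huBg, v, hv, rfl⟩
        calc v ⬝ᵥ δg - μg * ((Xg.mulVec v) ⬝ᵥ (Xg.mulVec δg))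
            = a * (v ⬝ᵥ u - μg * ((Xg.mulVec v) ⬝ᵥ (Xg.mulVec u))) := by
              rw [hδeq, Matrix.mulVec_smul]
              simp only [dotProduct_smul, smul_eq_mul]
              ring
          _ ≤ a * ρg := by
              exact mul_le_mul_of_nonneg_left hmem hapos.le
          _ = ρg * a := mul_comm _ _
    have hterm2 : μg * ((Xg.mulVec v) ⬝ᵥ ω) ≤ ηg * Real.sqrt (ω ⬝ᵥ ω) := by
      set b := Real.sqrt (ω ⬝ᵥ ω) with hb
      have hmem : (Xg.mulVec v) ⬝ᵥ (b⁻¹ • ω) ≤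
          sSup {r | ∃ v ∈ Bg, r = (Xg.mulVec v) ⬝ᵥ ((Real.sqrt (ω ⬝ᵥ ω))⁻¹ • ω)} :=
        le_csSup hηbdd ⟨v, hv, rfl⟩
      have hωeq : (Xg.mulVec v) ⬝ᵥ ω = b * ((Xg.mulVec v) ⬝ᵥ (b⁻¹ • ω)) := by
        rw [dotProduct_smul, smul_eq_mul]
        field_simp [hωpos.ne']
      rw [hηg, hωeq]
      calc μg * (b * ((Xg.mulVec v) ⬝ᵥ (b⁻¹ • ω)))
          ≤ μg * (b * sSup {r | ∃ v ∈ Bg,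
              r = (Xg.mulVec v) ⬝ᵥ ((Real.sqrt (ω ⬝ᵥ ω))⁻¹ • ω)}) := by
            apply mul_le_mul_of_nonneg_left _ hμ.le
            exact mul_le_mul_of_nonneg_left hmem hωpos.le
        _ = μg * sSup {r | ∃ v ∈ Bg,
              r = (Xg.mulVec v) ⬝ᵥ ((Real.sqrt (ω ⬝ᵥ ω))⁻¹ • ω)} * b := by ring
    have hterm3 : μg * (-((Xg.mulVec v) ⬝ᵥ (Xg.mulVec δ0))) ≤
        φg * Real.sqrt (δ0 ⬝ᵥ δ0) := by
      by_cases h : δ0 = 0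
      · simp [h, Matrix.mulVec_zero, mul_nonneg hφnn (Real.sqrt_nonneg _)]
      · set a := Real.sqrt (δ0 ⬝ᵥ δ0) with ha
        have hapos : 0 < a := by
          have : δ0 ⬝ᵥ δ0 ≠ 0 := fun hh => h ((dotProduct_self_eq_zero).mp hh)
          exact Real.sqrt_pos.mpr (lt_of_le_of_ne (dotnn δ0) (Ne.symm this))
        set u : Fin p → ℝ := a⁻¹ • δ0 with hu
        have huB0 : u ∈ B0 := by
          rw [hB0]
          refine ⟨hC0cone _ (inv_nonneg.mpr hapos.le) _ hδ0, ?_⟩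
          have h1 : u ⬝ᵥ u = a⁻¹ * (a⁻¹ * (δ0 ⬝ᵥ δ0)) := by
            rw [hu, smul_dotProduct, dotProduct_smul, smul_eq_mul, smul_eq_mul]
          have hsq : δ0 ⬝ᵥ δ0 = a * a := by
            rw [ha, Real.mul_self_sqrt (dotnn δ0)]
          rw [h1, hsq]
          field_simp
          simp
        have hδeq : δ0 = a • u := by
          rw [hu, smul_smul, mul_inv_cancel₀ hapos.ne', one_smul]
        have hmem : -((Xg.mulVec v) ⬝ᵥ (Xg.mulVec u)) ≤
            sSup {r | ∃ v ∈ Bg, ∃ u ∈ B0,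
              r = -((Xg.mulVec v) ⬝ᵥ (Xg.mulVec u))} :=
          le_csSup hφbdd ⟨v, hv, u, huB0, rfl⟩
        calc μg * (-((Xg.mulVec v) ⬝ᵥ (Xg.mulVec δ0)))
            = μg * a * (-((Xg.mulVec v) ⬝ᵥ (Xg.mulVec u))) := by
              rw [hδeq, Matrix.mulVec_smul, dotProduct_smul]
              simp only [smul_eq_mul]
              ring
          _ ≤ μg * a * sSup {r | ∃ v ∈ Bg, ∃ u ∈ B0,
                r = -((Xg.mulVec v) ⬝ᵥ (Xg.mulVec u))} := by
              exact mul_le_mul_of_nonneg_left hmem (mul_nonneg hμ.le hapos.le)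
          _ = φg * a := by rw [hφg]; ring
    linarith
  exact hproj.trans key
end

section
/- Let C ⊆ ℝ^p be a nonempty closed convex cone and z ∈ ℝ^p. Then the Euclidean projection Π_C(z) satisfies ‖Π_C(z)‖₂ ≤ sup_{v ∈ C, ‖v‖₂ ≤ 1} ⟨v, z⟩. -/
/-!
Since `C` is a cone, `w = Π_C(z)` also minimises `‖t • w - z‖` over the ray `t ≥ 0`; comparing
`t = 1` with the optimal `t = ⟪w, z⟫ / ‖w‖²` on that ray gives `⟪w, z⟫ = ‖w‖²`. Hence the vector
`‖w‖⁻¹ • w ∈ C` of norm at most one has `⟪‖w‖⁻¹ • w, z⟫ = ‖w‖`, so the supremum is at least `‖w‖`.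
-/

open RealInnerProductSpace

section

variable {E : Type*} [NormedAddCommGroup E] [InnerProductSpace ℝ E]

theorem inner_eq_norm_sq_of_forall_norm_sub_le_smul_sub {w z : E}
    (hmin : ∀ t : ℝ, 0 ≤ t → ‖w - z‖ ≤ ‖t • w - z‖) : ⟪w, z⟫ = ‖w‖ ^ 2 := by
  have hquad : ∀ t : ℝ, 0 ≤ t → ‖w‖ ^ 2 - 2 * ⟪w, z⟫ ≤ t ^ 2 * ‖w‖ ^ 2 - 2 * t * ⟪w, z⟫ := by
    intro t ht
    have h := pow_le_pow_left₀ (norm_nonneg _) (hmin t ht) 2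
    rw [norm_sub_sq_real, norm_sub_sq_real, norm_smul, real_inner_smul_left,
      Real.norm_of_nonneg ht] at h
    linarith
  rcases eq_or_ne w 0 with rfl | hw
  · simp
  have hb : 0 ≤ ⟪w, z⟫ := by nlinarith [hquad 0 le_rfl]
  have hopt := hquad (⟪w, z⟫ / ‖w‖ ^ 2) (by positivity)
  have hsq : (⟪w, z⟫ - ‖w‖ ^ 2) ^ 2 ≤ 0 := by
    field_simp at hopt
    nlinarith
  exact sub_eq_zero.mp (pow_eq_zero_iff two_ne_zero |>.mp (le_antisymm hsq (sq_nonneg _)))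

def innerValuesOnUnitBall (C : Set E) (z : E) : Set ℝ :=
  {r | ∃ v ∈ C, ‖v‖ ≤ 1 ∧ r = ⟪v, z⟫}

theorem bddAbove_innerValuesOnUnitBall (C : Set E) (z : E) :
    BddAbove (innerValuesOnUnitBall C z) := by
  refine ⟨‖z‖, ?_⟩
  rintro r ⟨v, -, hv, rfl⟩
  calc ⟪v, z⟫ ≤ ‖v‖ * ‖z‖ := real_inner_le_norm v z
    _ ≤ ‖z‖ := mul_le_of_le_one_left (norm_nonneg z) hv

theorem norm_mem_innerValuesOnUnitBall {C : Set E}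
    (hcone : ∀ c : ℝ, 0 ≤ c → ∀ x ∈ C, c • x ∈ C) {z w : E} (hw : w ∈ C)
    (hwz : ⟪w, z⟫ = ‖w‖ ^ 2) : ‖w‖ ∈ innerValuesOnUnitBall C z := by
  refine ⟨‖w‖⁻¹ • w, hcone _ (inv_nonneg.mpr (norm_nonneg w)) w hw, ?_, ?_⟩
  · rw [norm_smul, norm_inv, norm_norm]
    exact inv_mul_le_one_of_le₀ le_rfl (norm_nonneg w)
  · rw [real_inner_smul_left, hwz, sq, ← mul_assoc, inv_mul_mul_self]

end

theorem stmt_15_general {p : ℕ} (C : Set (EuclideanSpace ℝ (Fin p)))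
    (hcone : ∀ c : ℝ, 0 ≤ c → ∀ x ∈ C, c • x ∈ C)
    (z w : EuclideanSpace ℝ (Fin p)) (hw : w ∈ C)
    (hproj : ∀ c ∈ C, ‖w - z‖ ≤ ‖c - z‖) :
    ‖w‖ ≤ sSup {r | ∃ v ∈ C, ‖v‖ ≤ 1 ∧ r = (inner ℝ v z : ℝ)} := by
  have hwz : ⟪w, z⟫ = ‖w‖ ^ 2 :=
    inner_eq_norm_sq_of_forall_norm_sub_le_smul_sub fun t ht => hproj _ (hcone t ht w hw)
  exact le_csSup (bddAbove_innerValuesOnUnitBall C z) (norm_mem_innerValuesOnUnitBall hcone hw hwz)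

/-- Norm of the projection onto a closed convex cone is bounded by the support
value `sup_{v ∈ C, ‖v‖ ≤ 1} ⟨v, z⟩` (Lemma 6.2 of Oymak et al.). -/
theorem stmt_15 {p : ℕ} (C : Set (EuclideanSpace ℝ (Fin p)))
    (hC : IsClosed C) (hconv : Convex ℝ C)
    (hcone : ∀ c : ℝ, 0 ≤ c → ∀ x ∈ C, c • x ∈ C) (hne : C.Nonempty)
    (z w : EuclideanSpace ℝ (Fin p)) (hw : w ∈ C)
    (hproj : ∀ c ∈ C, ‖w - z‖ ≤ ‖c - z‖) :
    ‖w‖ ≤ sSup {r | ∃ v ∈ C, ‖v‖ ≤ 1 ∧ r = (inner ℝ v z : ℝ)} :=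
  stmt_15_general C hcone z w hw hproj
end

section
/- Let E ⊆ ℝ^p be a nonempty closed convex set containing 0, and let C = cone(E) be its closed conic hull. Then for every z ∈ ℝ^p, ‖Π_E(z)‖₂ ≤ ‖Π_C(z)‖₂. -/
open RealInnerProductSpace

lemma varineq {F : Type*} [NormedAddCommGroup F] [InnerProductSpace ℝ F]
    {K : Set F} (hK : Convex ℝ K) {z u : F} (hu : u ∈ K)
    (hmin : ∀ c ∈ K, ‖u - z‖ ≤ ‖c - z‖) :
    ∀ c ∈ K, ⟪z - u, c - u⟫ ≤ 0 := by
  have : Nonempty K := ⟨⟨u, hu⟩⟩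
  have heq : ‖z - u‖ = ⨅ c : K, ‖z - c‖ := by
    apply le_antisymm
    · exact le_ciInf fun c => by
        simpa [norm_sub_rev] using hmin c c.2
    · have hbdd : BddBelow (Set.range fun c : K => ‖z - (c : F)‖) := by
        refine ⟨0, ?_⟩
        rintro _ ⟨c, rfl⟩
        exact norm_nonneg _
      exact ciInf_le hbdd ⟨u, hu⟩
  exact (norm_eq_iInf_iff_real_inner_le_zero hK hu).1 heq

/-- Projection onto the conic hull has larger norm than projection onto the set
itself (Lemma 6.4 of Oymak et al.). -/
theorem stmt_17 {p : ℕ} (E : Set (EuclideanSpace ℝ (Fin p)))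
    (hE : IsClosed E) (hconv : Convex ℝ E) (h0 : (0 : EuclideanSpace ℝ (Fin p)) ∈ E)
    (C : Set (EuclideanSpace ℝ (Fin p)))
    (hC : C = closure {x | ∃ r : ℝ, 0 ≤ r ∧ ∃ e ∈ E, x = r • e})
    (z w w' : EuclideanSpace ℝ (Fin p))
    (hw : w ∈ E) (hwmin : ∀ c ∈ E, ‖w - z‖ ≤ ‖c - z‖)
    (hw' : w' ∈ C) (hw'min : ∀ c ∈ C, ‖w' - z‖ ≤ ‖c - z‖) :
    ‖w‖ ≤ ‖w'‖ := by
  set S : Set (EuclideanSpace ℝ (Fin p)) := {x | ∃ r : ℝ, 0 ≤ r ∧ ∃ e ∈ E, x = r • e} with hS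
  -- S is convex
  have hSconv : Convex ℝ S := by
    rintro x ⟨r, hr, e, he, rfl⟩ y ⟨s, hs, f, hf, rfl⟩ a b ha hb hab
    rcases eq_or_lt_of_le (by positivity : (0:ℝ) ≤ a * r + b * s) with h | h
    · have har : a * r = 0 ∧ b * s = 0 := by
        constructor <;> nlinarith [mul_nonneg ha hr, mul_nonneg hb hs]
      refine ⟨0, le_refl 0, 0, h0, ?_⟩
      rw [smul_smul, smul_smul, har.1, har.2]
      simp
    · refine ⟨a * r + b * s, le_of_lt h, (a*r/(a*r+b*s)) • e + (b*s/(a*r+b*s)) • f,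
        hconv he hf (by positivity) (by positivity) (by field_simp), ?_⟩
      rw [smul_add, smul_smul, smul_smul, smul_smul, smul_smul]
      congr 1 <;> congr 1 <;> field_simp <;> ring
  have hCconv : Convex ℝ C := hC ▸ hSconv.closure
  -- C closed under scaling by nonneg reals
  have hscale : ∀ t : ℝ, 0 ≤ t → ∀ x ∈ C, t • x ∈ C := by
    intro t ht x hx
    rw [hC] at hx ⊢
    have h1 : (fun y : EuclideanSpace ℝ (Fin p) => t • y) '' closure S ⊆
        closure ((fun y => t • y) '' S) := image_closure_subset_closure_image (continuous_const_smul t)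
    have h2 : (fun y : EuclideanSpace ℝ (Fin p) => t • y) '' S ⊆ S := by
      rintro _ ⟨_, ⟨r, hr, e, he, rfl⟩, rfl⟩
      exact ⟨t * r, by positivity, e, he, (smul_smul t r e)⟩
    exact closure_mono h2 (h1 ⟨x, hx, rfl⟩)
  have hwC : w ∈ C := by
    rw [hC]; exact subset_closure ⟨1, zero_le_one, w, hw, (one_smul ℝ w).symm⟩
  have h0C : (0 : EuclideanSpace ℝ (Fin p)) ∈ C := by
    rw [hC]; exact subset_closure ⟨0, le_refl 0, 0, h0, (zero_smul ℝ _).symm⟩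
  have hviE := varineq hconv hw hwmin
  have hviC := varineq hCconv hw' hw'min
  -- ⟪z - w, w⟫ ≥ 0
  have h1 : (0:ℝ) ≤ ⟪z - w, w⟫ := by
    have := hviE 0 h0
    rw [zero_sub, inner_neg_right] at this
    linarith
  -- ⟪z - w', w'⟫ = 0
  have h2 : ⟪z - w', w'⟫ = 0 := by
    have ha := hviC ((2:ℝ) • w') (hscale 2 (by norm_num) w' hw')
    have hb := hviC 0 h0C
    rw [zero_sub, inner_neg_right] at hb
    have : ((2:ℝ) • w' - w') = w' := by rw [two_smul]; abel
    rw [this] at ha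
    linarith
  have h3 := hviC w hwC
  -- expand
  have key : ‖w‖^2 ≤ ⟪w', w⟫ := by
    have e1 : ⟪z - w, w⟫ = ⟪z, w⟫ - ‖w‖^2 := by
      rw [inner_sub_left, real_inner_self_eq_norm_sq]
    have e2 : ⟪z - w', w'⟫ = ⟪z, w'⟫ - ‖w'‖^2 := by
      rw [inner_sub_left, real_inner_self_eq_norm_sq]
    have e3 : ⟪z - w', w - w'⟫ = ⟪z, w⟫ - ⟪z, w'⟫ - ⟪w', w⟫ + ‖w'‖^2 := by
      rw [inner_sub_left, inner_sub_right, inner_sub_right, real_inner_self_eq_norm_sq]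
      ring
    rw [e1] at h1; rw [e2] at h2; rw [e3] at h3
    linarith
  have hcs : ⟪w', w⟫ ≤ ‖w'‖ * ‖w‖ := real_inner_le_norm w' w
  rcases eq_or_lt_of_le (norm_nonneg w) with h | h
  · rw [← h]; exact norm_nonneg w'
  · have : ‖w‖ * ‖w‖ ≤ ‖w'‖ * ‖w‖ := by nlinarith [key, hcs]
    exact le_of_mul_le_mul_right this h
end
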